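/- Let n ≥ 1, let D₁, …, D_n ∈ {0, 1} with n₁ := Σ_i D_i satisfying 0 < n₁ < n, and set p := n₁/n. Let Y₁, …, Y_n ∈ ℝ and h₁, …, h_n ∈ ℝ^d, and set h̃_i := h_i − (1/n)Σ_j h_j. For d ∈ {0, 1}, let n_d be the number of units with D_i = d, and suppose the within-arm sample covariance matrices V_d := (1/n_d)Σ_{i: D_i = d} h̃_i h̃_iᵀ − ((1/n_d)Σ_{i: D_i = d} h̃_i)((1/n_d)Σ_{i: D_i = d} h̃_i)ᵀ are invertible; define the within-arm slopes α̂_d := V_d⁻¹·[(1/n_d)Σ_{i: D_i = d} h̃_i Y_i − ((1/n_d)Σ_{i: D_i = d} h̃_i)((1/n_d)Σ_{i: D_i = d} Y_i)]. Then the least-squares problem min over (a, t, b₁, b₂) ∈ ℝ × ℝ × ℝ^d × ℝ^d of Σ_{i=1}^n (Y_i − a − t·D_i − b₁ᵀh̃_i − D_i·b₂ᵀh̃_i)² has a unique minimizer, and its D-coefficient t (the Lin estimator τ̂_L) satisfies τ̂_L = (Ȳ₁ − Ȳ₀) − ((1 − p)·α̂₁ + p·α̂₀)ᵀ(h̄₁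 − h̄₀), where Ȳ_d and h̄_d are the within-arm means of Y_i and h_i. -/

import Mathlib

/-!
Since `D i ∈ {0, 1}`, the interacted objective is the sum of two weighted least-squares
objectives, one per arm (weights `D` and `1 - D`), in the coefficients `(a + t, b₁ + b₂)` and
`(a, b₁)`. In each arm the intercept and slope `α = V⁻¹ Cov(h̃, Y)` solve the normal equations, so
their residual is orthogonal to every affine function of the covariates and the arm objective
equals its value there plus a weighted sum of squares of an affine function; that sum vanishes
only at the zero function because `V` is invertible. Hence the minimizer is unique, `t = c₁ - c₀`
is the difference of the arm intercepts `c_d = Ȳ_d - α_dᵀ m_d`, and the arm means of the centred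
covariates are `m₁ = (1 - p)(h̄₁ - h̄₀)` and `m₀ = -p(h̄₁ - h̄₀)`.
-/

open Matrix

theorem sum_mul_sq_sub_of_sum_mul_mul_eq_zero {ι : Type*} [Fintype ι] (w ρ e : ι → ℝ)
    (h : ∑ i, w i * (ρ i * e i) = 0) :
    ∑ i, w i * (ρ i - e i) ^ 2 = ∑ i, w i * ρ i ^ 2 + ∑ i, w i * e i ^ 2 := by
  have hexp : ∀ i, w i * (ρ i - e i) ^ 2
      = w i * ρ i ^ 2 + w i * e i ^ 2 - 2 * (w i * (ρ i * e i)) := fun i => by ring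
  simp only [hexp, Finset.sum_sub_distrib, Finset.sum_add_distrib, ← Finset.mul_sum, h]
  ring

noncomputable section WeightedLeastSquares

variable {ι κ : Type*} [Fintype ι] [Fintype κ]

-- The normalizer `W` is a separate argument (equal to `∑ i, w i` wherever it is used) so that these
-- definitions unfold to the paper's formulas with `n₁` and `n₀ = n - n₁`.
def weightedMean (w : ι → ℝ) (W : ℝ) (f : ι → ℝ) : ℝ := (∑ i, w i * f i) / W

def weightedCov (w : ι → ℝ) (W : ℝ) (f g : ι → ℝ) : ℝ :=
  weightedMean w W (fun i => f i * g i) - weightedMean w W f * weightedMean w W g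

variable (w : ι → ℝ) (W : ℝ) (x : ι → κ → ℝ) (Y : ι → ℝ)

def weightedMeanVec : κ → ℝ := fun r => weightedMean w W fun i => x i r

def weightedCovMatrix : Matrix κ κ ℝ :=
  Matrix.of fun r s => weightedCov w W (fun i => x i r) (fun i => x i s)

def wlsSlope [DecidableEq κ] : κ → ℝ :=
  (weightedCovMatrix w W x)⁻¹ *ᵥ fun r => weightedCov w W (fun i => x i r) Y

def wlsIntercept [DecidableEq κ] : ℝ :=
  weightedMean w W Y - wlsSlope w W x Y ⬝ᵥ weightedMeanVec w W x

def weightedSSR (c : ℝ) (β : κ → ℝ) : ℝ := ∑ i, w i * (Y i - c - β ⬝ᵥ x i) ^ 2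

theorem sum_mul_mul_affine (g : ι → ℝ) (c : ℝ) (β : κ → ℝ) :
    ∑ i, w i * (g i * (c + β ⬝ᵥ x i))
      = c * ∑ i, w i * g i + ∑ r, β r * ∑ i, w i * (g i * x i r) := by
  simp only [dotProduct, mul_add, Finset.sum_add_distrib, Finset.mul_sum]
  rw [Finset.sum_comm (f := fun i r => _)]
  congr 1 <;> refine Finset.sum_congr rfl fun _ _ => ?_
  · ring
  · exact Finset.sum_congr rfl fun _ _ => by ring

theorem dotProduct_weightedMeanVec (β : κ → ℝ) :
    β ⬝ᵥ weightedMeanVec w W x = (∑ r, β r * ∑ i, w i * x i r) / W := by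
  simp only [dotProduct, weightedMeanVec, weightedMean, Finset.sum_div, mul_div_assoc]

theorem weightedCovMatrix_mulVec (β : κ → ℝ) (r : κ) :
    (weightedCovMatrix w W x *ᵥ β) r = (∑ s, β s * ∑ i, w i * (x i r * x i s)) / W
      - weightedMeanVec w W x r * (β ⬝ᵥ weightedMeanVec w W x) := by
  have hterm : ∀ s, weightedCovMatrix w W x r s * β s = β s * (∑ i, w i * (x i r * x i s)) / W
      - weightedMeanVec w W x r * (β s * weightedMeanVec w W x s) := fun s => by
    simp only [weightedCovMatrix, weightedCov, weightedMeanVec, weightedMean, of_apply]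
    ring
  rw [mulVec, dotProduct, Finset.sum_congr rfl fun s _ => hterm s, Finset.sum_sub_distrib,
    ← Finset.sum_div, ← Finset.mul_sum]
  rfl

theorem sum_mul_affine (hW : ∑ i, w i = W) (hW0 : W ≠ 0) (c : ℝ) (β : κ → ℝ) :
    ∑ i, w i * (c + β ⬝ᵥ x i) = W * (c + β ⬝ᵥ weightedMeanVec w W x) := by
  have := sum_mul_mul_affine w x (fun _ => 1) c β
  simp only [one_mul, mul_one, hW] at this
  rw [this, dotProduct_weightedMeanVec]
  field_simp

theorem sum_mul_covariate_mul_affine (hW0 : W ≠ 0) (r : κ) (c : ℝ) (β : κ → ℝ) :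
    ∑ i, w i * (x i r * (c + β ⬝ᵥ x i)) = W * ((weightedCovMatrix w W x *ᵥ β) r
      + weightedMeanVec w W x r * (c + β ⬝ᵥ weightedMeanVec w W x)) := by
  rw [sum_mul_mul_affine, weightedCovMatrix_mulVec]
  simp only [weightedMeanVec, weightedMean]
  field_simp
  ring

variable [DecidableEq κ]

theorem weightedCovMatrix_mulVec_wlsSlope (hV : IsUnit (weightedCovMatrix w W x)) :
    weightedCovMatrix w W x *ᵥ wlsSlope w W x Y = fun r => weightedCov w W (fun i => x i r) Y := by
  rw [wlsSlope, mulVec_mulVec, mul_nonsing_inv _ ((isUnit_iff_isUnit_det _).mp hV), one_mulVec]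

section

variable {w W x} (hW : ∑ i, w i = W) (hW0 : W ≠ 0) (hV : IsUnit (weightedCovMatrix w W x))
include hW hW0 hV

theorem sum_mul_wlsResidual_mul_affine (c : ℝ) (β : κ → ℝ) :
    ∑ i, w i * ((Y i - wlsIntercept w W x Y - wlsSlope w W x Y ⬝ᵥ x i) * (c + β ⬝ᵥ x i)) = 0 := by
  set c₀ := wlsIntercept w W x Y
  set α := wlsSlope w W x Y
  have hfit : c₀ + α ⬝ᵥ weightedMeanVec w W x = weightedMean w W Y := sub_add_cancel _ _
  have horth₀ : ∑ i, w i * (Y i - c₀ - α ⬝ᵥ x i) = 0 := by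
    have : ∑ i, w i * (Y i - c₀ - α ⬝ᵥ x i) = ∑ i, w i * Y i - ∑ i, w i * (c₀ + α ⬝ᵥ x i) := by
      rw [← Finset.sum_sub_distrib]
      exact Finset.sum_congr rfl fun _ _ => by ring
    rw [this, sum_mul_affine w W x hW hW0, hfit, weightedMean]
    field_simp
    ring
  have horth : ∀ r, ∑ i, w i * ((Y i - c₀ - α ⬝ᵥ x i) * x i r) = 0 := by
    intro r
    have : ∑ i, w i * ((Y i - c₀ - α ⬝ᵥ x i) * x i r)
        = ∑ i, w i * (x i r * Y i) - ∑ i, w i * (x i r * (c₀ + α ⬝ᵥ x i)) := by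
      rw [← Finset.sum_sub_distrib]
      exact Finset.sum_congr rfl fun _ _ => by ring
    rw [this, sum_mul_covariate_mul_affine w W x hW0, hfit,
      congrFun (weightedCovMatrix_mulVec_wlsSlope w W x Y hV) r]
    simp only [weightedCov, weightedMeanVec, weightedMean]
    field_simp
    ring
  simp [sum_mul_mul_affine, horth₀, horth]

theorem weightedSSR_eq_wls_add (c : ℝ) (β : κ → ℝ) :
    weightedSSR w x Y c β = weightedSSR w x Y (wlsIntercept w W x Y) (wlsSlope w W x Y)
      + ∑ i, w i * ((c - wlsIntercept w W x Y) + (β - wlsSlope w W x Y) ⬝ᵥ x i) ^ 2 := by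
  have hsplit : ∀ i, Y i - c - β ⬝ᵥ x i = (Y i - wlsIntercept w W x Y - wlsSlope w W x Y ⬝ᵥ x i)
      - ((c - wlsIntercept w W x Y) + (β - wlsSlope w W x Y) ⬝ᵥ x i) := fun i => by
    rw [sub_dotProduct]
    ring
  simp only [weightedSSR, hsplit]
  exact sum_mul_sq_sub_of_sum_mul_mul_eq_zero w _ _
    (sum_mul_wlsResidual_mul_affine Y hW hW0 hV _ _)

theorem eq_zero_of_sum_mul_affine_sq_eq_zero (hw : ∀ i, 0 ≤ w i) {c : ℝ} {β : κ → ℝ}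
    (h : ∑ i, w i * (c + β ⬝ᵥ x i) ^ 2 = 0) : c = 0 ∧ β = 0 := by
  have hwe : ∀ i, w i * (c + β ⬝ᵥ x i) = 0 := by
    intro i
    have hi := (Finset.sum_eq_zero_iff_of_nonneg fun j _ => mul_nonneg (hw j) (sq_nonneg _)).1 h i
      (Finset.mem_univ i)
    have : (w i * (c + β ⬝ᵥ x i)) ^ 2 = w i * (w i * (c + β ⬝ᵥ x i) ^ 2) := by ring
    rwa [hi, mul_zero, sq_eq_zero_iff] at this
  have hmean : c + β ⬝ᵥ weightedMeanVec w W x = 0 := by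
    have := sum_mul_affine w W x hW hW0 c β
    rw [Finset.sum_eq_zero fun i _ => hwe i] at this
    exact (mul_eq_zero.1 this.symm).resolve_left hW0
  have hVβ : weightedCovMatrix w W x *ᵥ β = 0 := by
    funext r
    have := sum_mul_covariate_mul_affine w W x hW0 r c β
    rw [Finset.sum_eq_zero fun i _ => by rw [mul_left_comm, hwe, mul_zero], hmean, mul_zero,
      add_zero] at this
    exact (mul_eq_zero.1 this.symm).resolve_left hW0
  have hβ : β = 0 := mulVec_injective_iff_isUnit.2 hV (by rw [hVβ, mulVec_zero])
  refine ⟨?_, hβ⟩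
  simpa [hβ] using hmean

theorem weightedSSR_wls_le (hw : ∀ i, 0 ≤ w i) (c : ℝ) (β : κ → ℝ) :
    weightedSSR w x Y (wlsIntercept w W x Y) (wlsSlope w W x Y) ≤ weightedSSR w x Y c β := by
  rw [weightedSSR_eq_wls_add Y hW hW0 hV c β]
  exact le_add_of_nonneg_right (Finset.sum_nonneg fun i _ => mul_nonneg (hw i) (sq_nonneg _))

theorem weightedSSR_le_wls_iff (hw : ∀ i, 0 ≤ w i) {c : ℝ} {β : κ → ℝ} :
    weightedSSR w x Y c β ≤ weightedSSR w x Y (wlsIntercept w W x Y) (wlsSlope w W x Y) ↔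
      c = wlsIntercept w W x Y ∧ β = wlsSlope w W x Y := by
  constructor
  · intro hle
    rw [weightedSSR_eq_wls_add Y hW hW0 hV c β, add_le_iff_nonpos_right] at hle
    obtain ⟨hc, hβ⟩ := eq_zero_of_sum_mul_affine_sq_eq_zero hW hW0 hV hw
      (le_antisymm hle (Finset.sum_nonneg fun i _ => mul_nonneg (hw i) (sq_nonneg _)))
    exact ⟨sub_eq_zero.1 hc, sub_eq_zero.1 hβ⟩
  · rintro ⟨rfl, rfl⟩
    exact le_rfl

end

end WeightedLeastSquares

noncomputable section InteractedRegression

variable {ι κ : Type*} [Fintype ι] [Fintype κ] (D : ι → ℝ) (x : ι → κ → ℝ) (Y : ι → ℝ)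

def interactedSSR (q : ℝ × ℝ × (κ → ℝ) × (κ → ℝ)) : ℝ :=
  ∑ i, (Y i - q.1 - q.2.1 * D i - q.2.2.1 ⬝ᵥ x i - D i * q.2.2.2 ⬝ᵥ x i) ^ 2

theorem interactedSSR_eq (hD : ∀ i, D i = 0 ∨ D i = 1) (q : ℝ × ℝ × (κ → ℝ) × (κ → ℝ)) :
    interactedSSR D x Y q = weightedSSR D x Y (q.1 + q.2.1) (q.2.2.1 + q.2.2.2)
      + weightedSSR (fun i => 1 - D i) x Y q.1 q.2.2.1 := by
  simp only [interactedSSR, weightedSSR, ← Finset.sum_add_distrib, add_dotProduct]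
  refine Finset.sum_congr rfl fun i _ => ?_
  rcases hD i with hDi | hDi <;> rw [hDi] <;> ring

def interactedFit [DecidableEq κ] (W₁ W₀ : ℝ) : ℝ × ℝ × (κ → ℝ) × (κ → ℝ) :=
  (wlsIntercept (fun i => 1 - D i) W₀ x Y,
    wlsIntercept D W₁ x Y - wlsIntercept (fun i => 1 - D i) W₀ x Y,
    wlsSlope (fun i => 1 - D i) W₀ x Y, wlsSlope D W₁ x Y - wlsSlope (fun i => 1 - D i) W₀ x Y)

theorem interactedSSR_isMin_iff [DecidableEq κ] (hD : ∀ i, D i = 0 ∨ D i = 1) {W₁ W₀ : ℝ}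
    (hW₁ : ∑ i, D i = W₁) (hW₀ : ∑ i, (1 - D i) = W₀) (h₁ : W₁ ≠ 0) (h₀ : W₀ ≠ 0)
    (hV₁ : IsUnit (weightedCovMatrix D W₁ x))
    (hV₀ : IsUnit (weightedCovMatrix (fun i => 1 - D i) W₀ x)) (q : ℝ × ℝ × (κ → ℝ) × (κ → ℝ)) :
    (∀ q', interactedSSR D x Y q ≤ interactedSSR D x Y q') ↔ q = interactedFit D x Y W₁ W₀ := by
  have hw₁ : ∀ i, 0 ≤ D i := fun i => by rcases hD i with h | h <;> simp [h]
  have hw₀ : ∀ i, 0 ≤ 1 - D i := fun i => by rcases hD i with h | h <;> simp [h]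
  have arm₁ := weightedSSR_wls_le Y hW₁ h₁ hV₁ hw₁
  have arm₀ := weightedSSR_wls_le Y hW₀ h₀ hV₀ hw₀
  have hfit : interactedSSR D x Y (interactedFit D x Y W₁ W₀)
      = weightedSSR D x Y (wlsIntercept D W₁ x Y) (wlsSlope D W₁ x Y)
        + weightedSSR (fun i => 1 - D i) x Y (wlsIntercept (fun i => 1 - D i) W₀ x Y)
          (wlsSlope (fun i => 1 - D i) W₀ x Y) := by
    rw [interactedSSR_eq D x Y hD, interactedFit, add_sub_cancel, add_sub_cancel]
  constructor
  · intro hq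
    obtain ⟨a, t, b₁, b₂⟩ := q
    have hle := hq (interactedFit D x Y W₁ W₀)
    rw [interactedSSR_eq D x Y hD, hfit] at hle
    obtain ⟨hc₁, hβ₁⟩ := (weightedSSR_le_wls_iff Y hW₁ h₁ hV₁ hw₁ (c := a + t) (β := b₁ + b₂)).1
      (by linarith [arm₀ a b₁])
    obtain ⟨rfl, rfl⟩ := (weightedSSR_le_wls_iff Y hW₀ h₀ hV₀ hw₀ (c := a) (β := b₁)).1
      (by linarith [arm₁ (a + t) (b₁ + b₂)])
    rw [interactedFit, ← hc₁, ← hβ₁, add_sub_cancel_left, add_sub_cancel_left]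
  · rintro rfl q'
    rw [hfit, interactedSSR_eq D x Y hD]
    exact add_le_add (arm₁ _ _) (arm₀ _ _)

end InteractedRegression

section CenteredCovariates

variable {ι : Type*} [Fintype ι]

theorem weightedMean_sub_const {w : ι → ℝ} {W : ℝ} (hW : ∑ i, w i = W) (hW0 : W ≠ 0)
    (f : ι → ℝ) (k : ℝ) : weightedMean w W (fun i => f i - k) = weightedMean w W f - k := by
  simp only [weightedMean, mul_sub, Finset.sum_sub_distrib, ← Finset.sum_mul, hW]
  field_simp

theorem sum_eq_add_weightedMean (w : ι → ℝ) {W₁ W₀ : ℝ} (h₁ : W₁ ≠ 0) (h₀ : W₀ ≠ 0)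
    (f : ι → ℝ) :
    ∑ i, f i = W₁ * weightedMean w W₁ f + W₀ * weightedMean (fun i => 1 - w i) W₀ f := by
  simp only [weightedMean, mul_div_cancel₀ _ h₁, mul_div_cancel₀ _ h₀, ← Finset.sum_add_distrib]
  exact Finset.sum_congr rfl fun _ _ => by ring

theorem weightedMean_centered {w : ι → ℝ} {N W₁ : ℝ} (hW₁ : ∑ i, w i = W₁) (hN : N ≠ 0)
    (h₁ : W₁ ≠ 0) (h₀ : N - W₁ ≠ 0) (f : ι → ℝ) :
    weightedMean w W₁ (fun i => f i - 1 / N * ∑ j, f j)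
      = (1 - W₁ / N) * (weightedMean w W₁ f - weightedMean (fun i => 1 - w i) (N - W₁) f) := by
  rw [weightedMean_sub_const hW₁ h₁, sum_eq_add_weightedMean w h₁ h₀ f]
  field_simp
  ring

theorem weightedMean_one_sub_centered {w : ι → ℝ} {N W₁ : ℝ} (hW₀ : ∑ i, (1 - w i) = N - W₁)
    (hN : N ≠ 0) (h₁ : W₁ ≠ 0) (h₀ : N - W₁ ≠ 0) (f : ι → ℝ) :
    weightedMean (fun i => 1 - w i) (N - W₁) (fun i => f i - 1 / N * ∑ j, f j)
      = -(W₁ / N * (weightedMean w W₁ f - weightedMean (fun i => 1 - w i) (N - W₁) f)) := by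
  rw [weightedMean_sub_const hW₀ h₀, sum_eq_add_weightedMean w h₁ h₀ f]
  field_simp
  ring

end CenteredCovariates

theorem lin_estimator_representation_general
    (n : ℕ) (dd : ℕ)
    (D : Fin n → ℝ) (hD01 : ∀ i, D i = 0 ∨ D i = 1)
    (n₁ : ℝ) (hn₁ : n₁ = ∑ i, D i) (hpos : 0 < n₁) (hlt : n₁ < n)
    (Y : Fin n → ℝ) (h : Fin n → Fin dd → ℝ) :
    let p : ℝ := n₁ / n
    let n₀ : ℝ := (n : ℝ) - n₁
    let htil : Fin n → Fin dd → ℝ := fun i r => h i r - (1 / (n : ℝ)) * ∑ j, h j r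
    let V₁ : Matrix (Fin dd) (Fin dd) ℝ := Matrix.of fun r s =>
      (∑ i, D i * (htil i r * htil i s)) / n₁
        - ((∑ i, D i * htil i r) / n₁) * ((∑ i, D i * htil i s) / n₁)
    let V₀ : Matrix (Fin dd) (Fin dd) ℝ := Matrix.of fun r s =>
      (∑ i, (1 - D i) * (htil i r * htil i s)) / n₀
        - ((∑ i, (1 - D i) * htil i r) / n₀) * ((∑ i, (1 - D i) * htil i s) / n₀)
    let α₁ : Fin dd → ℝ := V₁⁻¹ *ᵥ fun r =>
      (∑ i, D i * (htil i r * Y i)) / n₁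
        - ((∑ i, D i * htil i r) / n₁) * ((∑ i, D i * Y i) / n₁)
    let α₀ : Fin dd → ℝ := V₀⁻¹ *ᵥ fun r =>
      (∑ i, (1 - D i) * (htil i r * Y i)) / n₀
        - ((∑ i, (1 - D i) * htil i r) / n₀) * ((∑ i, (1 - D i) * Y i) / n₀)
    let Ybar1 : ℝ := (∑ i, D i * Y i) / n₁
    let Ybar0 : ℝ := (∑ i, (1 - D i) * Y i) / n₀
    let hbar1 : Fin dd → ℝ := fun r => (∑ i, D i * h i r) / n₁
    let hbar0 : Fin dd → ℝ := fun r => (∑ i, (1 - D i) * h i r) / n₀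
    let Q : ℝ × ℝ × (Fin dd → ℝ) × (Fin dd → ℝ) → ℝ := fun q =>
      ∑ i, (Y i - q.1 - q.2.1 * D i - (∑ r, q.2.2.1 r * htil i r)
        - D i * ∑ r, q.2.2.2 r * htil i r) ^ 2
    IsUnit V₁ → IsUnit V₀ →
      (∃! q : ℝ × ℝ × (Fin dd → ℝ) × (Fin dd → ℝ), ∀ q', Q q ≤ Q q') ∧
      (∀ q : ℝ × ℝ × (Fin dd → ℝ) × (Fin dd → ℝ), (∀ q', Q q ≤ Q q') →
        q.2.1 = (Ybar1 - Ybar0)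
          - ∑ r, ((1 - p) * α₁ r + p * α₀ r) * (hbar1 r - hbar0 r)) := by
  intro p n₀ htil V₁ V₀ α₁ α₀ Ybar1 Ybar0 hbar1 hbar0 Q hV₁ hV₀
  have hn : (n : ℝ) ≠ 0 := by linarith
  have hn₀ : ∑ i, (1 - D i) = n₀ := by simp [Finset.sum_sub_distrib, hn₁, n₀]
  have hn₀0 : n₀ ≠ 0 := (sub_pos.2 hlt).ne'
  have hopt := interactedSSR_isMin_iff D htil Y hD01 hn₁.symm hn₀ hpos.ne' hn₀0 hV₁ hV₀
  refine ⟨⟨_, (hopt _).2 rfl, fun q hq => (hopt q).1 hq⟩, fun q hq => ?_⟩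
  rw [(hopt q).1 hq]
  have hm₁ : weightedMeanVec D n₁ htil = fun r => (1 - p) * (hbar1 r - hbar0 r) :=
    funext fun r => weightedMean_centered hn₁.symm hn hpos.ne' hn₀0 (fun i => h i r)
  have hm₀ : weightedMeanVec (fun i => 1 - D i) n₀ htil = fun r => -(p * (hbar1 r - hbar0 r)) :=
    funext fun r => weightedMean_one_sub_centered hn₀ hn hpos.ne' hn₀0 (fun i => h i r)
  show (Ybar1 - α₁ ⬝ᵥ weightedMeanVec D n₁ htil)
    - (Ybar0 - α₀ ⬝ᵥ weightedMeanVec (fun i => 1 - D i) n₀ htil) = _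
  have hsum : ∑ r, ((1 - p) * α₁ r + p * α₀ r) * (hbar1 r - hbar0 r)
      = α₁ ⬝ᵥ weightedMeanVec D n₁ htil - α₀ ⬝ᵥ weightedMeanVec (fun i => 1 - D i) n₀ htil := by
    rw [hm₁, hm₀, dotProduct, dotProduct, ← Finset.sum_sub_distrib]
    exact Finset.sum_congr rfl fun r _ => by ring
  rw [hsum]
  ring

/-- **Finite-sample representation of the Lin estimator** (proof of Theorem 3.1 of the
paper). The interacted least-squares problem
`min over (a, t, b₁, b₂) of Σᵢ (Yᵢ − a − t·Dᵢ − b₁ᵀh̃ᵢ − Dᵢ·b₂ᵀh̃ᵢ)²`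
has a unique minimizer when the within-arm sample covariance matrices `V₁, V₀` of the
demeaned covariates are invertible, and its `D`-coefficient equals
`(Ȳ₁ − Ȳ₀) − ((1 − p)α̂₁ + p·α̂₀)ᵀ(h̄₁ − h̄₀)`. -/
theorem lin_estimator_representation
    (n : ℕ) (hn : 1 ≤ n) (dd : ℕ)
    (D : Fin n → ℝ) (hD01 : ∀ i, D i = 0 ∨ D i = 1)
    (n₁ : ℝ) (hn₁ : n₁ = ∑ i, D i) (hpos : 0 < n₁) (hlt : n₁ < n)
    (Y : Fin n → ℝ) (h : Fin n → Fin dd → ℝ) :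
    let p : ℝ := n₁ / n
    let n₀ : ℝ := (n : ℝ) - n₁
    let htil : Fin n → Fin dd → ℝ := fun i r => h i r - (1 / (n : ℝ)) * ∑ j, h j r
    let V₁ : Matrix (Fin dd) (Fin dd) ℝ := Matrix.of fun r s =>
      (∑ i, D i * (htil i r * htil i s)) / n₁
        - ((∑ i, D i * htil i r) / n₁) * ((∑ i, D i * htil i s) / n₁)
    let V₀ : Matrix (Fin dd) (Fin dd) ℝ := Matrix.of fun r s =>
      (∑ i, (1 - D i) * (htil i r * htil i s)) / n₀
        - ((∑ i, (1 - D i) * htil i r) / n₀) * ((∑ i, (1 - D i) * htil i s) / n₀)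
    let α₁ : Fin dd → ℝ := V₁⁻¹ *ᵥ fun r =>
      (∑ i, D i * (htil i r * Y i)) / n₁
        - ((∑ i, D i * htil i r) / n₁) * ((∑ i, D i * Y i) / n₁)
    let α₀ : Fin dd → ℝ := V₀⁻¹ *ᵥ fun r =>
      (∑ i, (1 - D i) * (htil i r * Y i)) / n₀
        - ((∑ i, (1 - D i) * htil i r) / n₀) * ((∑ i, (1 - D i) * Y i) / n₀)
    let Ybar1 : ℝ := (∑ i, D i * Y i) / n₁
    let Ybar0 : ℝ := (∑ i, (1 - D i) * Y i) / n₀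
    let hbar1 : Fin dd → ℝ := fun r => (∑ i, D i * h i r) / n₁
    let hbar0 : Fin dd → ℝ := fun r => (∑ i, (1 - D i) * h i r) / n₀
    let Q : ℝ × ℝ × (Fin dd → ℝ) × (Fin dd → ℝ) → ℝ := fun q =>
      ∑ i, (Y i - q.1 - q.2.1 * D i - (∑ r, q.2.2.1 r * htil i r)
        - D i * ∑ r, q.2.2.2 r * htil i r) ^ 2
    IsUnit V₁ → IsUnit V₀ →
      (∃! q : ℝ × ℝ × (Fin dd → ℝ) × (Fin dd → ℝ), ∀ q', Q q ≤ Q q') ∧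
      (∀ q : ℝ × ℝ × (Fin dd → ℝ) × (Fin dd → ℝ), (∀ q', Q q ≤ Q q') →
        q.2.1 = (Ybar1 - Ybar0)
          - ∑ r, ((1 - p) * α₁ r + p * α₀ r) * (hbar1 r - hbar0 r)) :=
  lin_estimator_representation_general n dd D hD01 n₁ hn₁ hpos hlt Y h
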